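/- arXiv:2003.13229 — 2 statements merged into one kernel-verified Lean document; each statement's English description precedes it below -/
import Mathlib

section
/- For every even positive integer k, 1/(2k+1) = 1/(3k+3) + 1/(6k+3) + 1/(6k^2+9k+3), and all three denominators 3k+3, 6k+3, 6k^2+9k+3 are odd. -/
/-!
With `k + 1` and `2k + 1` as the building blocks, the three denominators are `3(k + 1)`,
`3(2k + 1)` and `3(k + 1)(2k + 1)`, and over the common denominator `3(k + 1)(2k + 1)` the
numerators add up to `(2k + 1) + (k + 1) + 1 = 3(k + 1)`. Since `2k + 1` is always odd, the
denominators are odd exactly when `k + 1` is, i.e. when `k` is even.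
-/

theorem one_div_two_mul_add_one_eq_sum {K : Type*} [Field K] [LinearOrder K]
    [IsStrictOrderedRing K] {x : K} (hx : 0 ≤ x) :
    1 / (2 * x + 1) = 1 / (3 * x + 3) + 1 / (6 * x + 3) + 1 / (6 * x ^ 2 + 9 * x + 3) := by
  have h₁ : x + 1 ≠ 0 := by positivity
  have h₂ : 2 * x + 1 ≠ 0 := by positivity
  rw [show 3 * x + 3 = 3 * (x + 1) by ring, show 6 * x + 3 = 3 * (2 * x + 1) by ring,
    show 6 * x ^ 2 + 9 * x + 3 = 3 * (x + 1) * (2 * x + 1) by ring]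
  field_simp
  ring

theorem Nat.odd_six_mul_add_three (k : ℕ) : Odd (6 * k + 3) :=
  ⟨3 * k + 1, by ring⟩

theorem Nat.odd_three_mul_add_three {k : ℕ} (hk : Even k) : Odd (3 * k + 3) := by
  obtain ⟨m, rfl⟩ := hk
  exact ⟨3 * m + 1, by ring⟩

theorem Nat.odd_six_mul_sq_add_nine_mul_add_three {k : ℕ} (hk : Even k) :
    Odd (6 * k ^ 2 + 9 * k + 3) := by
  obtain ⟨m, rfl⟩ := hk
  exact ⟨12 * m ^ 2 + 9 * m + 1, by ring⟩

theorem stmt_6_general (k : ℕ) (heven : Even k) :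
    (1 : ℚ) / (2 * k + 1) = 1 / (3 * k + 3) + 1 / (6 * k + 3) + 1 / (6 * k ^ 2 + 9 * k + 3) ∧
      Odd (3 * k + 3) ∧ Odd (6 * k + 3) ∧ Odd (6 * k ^ 2 + 9 * k + 3) :=
  ⟨one_div_two_mul_add_one_eq_sum k.cast_nonneg, Nat.odd_three_mul_add_three heven,
    Nat.odd_six_mul_add_three k, Nat.odd_six_mul_sq_add_nine_mul_add_three heven⟩

theorem stmt_6 (k : ℕ) (hk : 0 < k) (heven : Even k) :
    (1 : ℚ) / (2 * k + 1) = 1 / (3 * k + 3) + 1 / (6 * k + 3) + 1 / (6 * k ^ 2 + 9 * k + 3) ∧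
      Odd (3 * k + 3) ∧ Odd (6 * k + 3) ∧ Odd (6 * k ^ 2 + 9 * k + 3) :=
  stmt_6_general k heven
end

section
/- Every rational number a/b with 0 < a < b has a representation as a finite sum of distinct unit fractions 1/n with n > 1. -/
/-!
Greedy algorithm (Fibonacci–Sylvester): for `0 < a < b` take the least `n` with `1/n ≤ a/b`.
Then `a/b - 1/n = (n a - b)/(b n)` has the smaller numerator `n a - b < a`, so the process
terminates. The induction carries the bound `b ≤ m a`, i.e. `1/m ≤ a/b`, for every denominator `m`;
for the remainder `< 1/n` it forces all later denominators to exceed `n`, which keeps them distinct,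
and since `a < b` it forces `m > 1`.
-/

theorem Nat.exists_le_mul_lt_add {a : ℕ} (ha : 0 < a) (b : ℕ) :
    ∃ n, b ≤ n * a ∧ n * a < b + a := by
  refine ⟨(b + a - 1) / a, ?_, ?_⟩ <;>
  · have := Nat.div_add_mod' (b + a - 1) a
    have := Nat.mod_lt (b + a - 1) ha
    omega

theorem exists_finset_sum_one_div_eq_div {a b : ℕ} (hab : a < b) :
    ∃ S : Finset ℕ, (∀ n ∈ S, b ≤ n * a) ∧ (a : ℚ) / b = ∑ n ∈ S, (1 : ℚ) / n := by
  induction a using Nat.strong_induction_on generalizing b with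
  | _ a ih =>
  rcases Nat.eq_zero_or_pos a with rfl | ha
  · exact ⟨∅, by simp, by simp⟩
  obtain ⟨n, hbn, hnb⟩ := Nat.exists_le_mul_lt_add ha b
  have hn : 0 < n := Nat.pos_of_ne_zero (by rintro rfl; omega)
  have hrem : n * a - b < a := by omega
  obtain ⟨S, hS, hsum⟩ := ih (n * a - b) hrem (b := b * n) (by nlinarith)
  have hnS : n ∉ S := fun h => by nlinarith [hS n h]
  refine ⟨insert n S, (Finset.forall_mem_insert _ _ _).mpr ⟨hbn, fun m hm => ?_⟩, ?_⟩
  · calc b ≤ b * n := Nat.le_mul_of_pos_right b hn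
      _ ≤ m * (n * a - b) := hS m hm
      _ ≤ m * a := Nat.mul_le_mul_left m hrem.le
  · rw [Finset.sum_insert hnS, ← hsum, Nat.cast_sub hbn]
    have hb : (b : ℚ) ≠ 0 := by norm_cast; omega
    push_cast
    field_simp
    ring

theorem stmt_18_general (a b : ℕ) (hab : a < b) :
    ∃ (S : Finset ℕ), (∀ n ∈ S, 1 < n) ∧ (a : ℚ) / b = ∑ n ∈ S, (1 : ℚ) / n := by
  obtain ⟨S, hS, hsum⟩ := exists_finset_sum_one_div_eq_div hab
  exact ⟨S, fun n hn => Nat.lt_of_mul_lt_mul_right (a := a) (by linarith [hS n hn]), hsum⟩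

theorem stmt_18 (a b : ℕ) (ha : 0 < a) (hab : a < b) :
    ∃ (S : Finset ℕ), (∀ n ∈ S, 1 < n) ∧ (a : ℚ) / b = ∑ n ∈ S, (1 : ℚ) / n :=
  stmt_18_general a b hab
end
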